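/- Theorem 6.2 (bounded projection implies linear growth): Let X be a δ-hyperbolic geodesic metric space and let h be a hyperbolic isometry of X. If a nonempty subset Y ⊆ X has bounded projection with respect to h, then there is a constant K ≥ 0 such that for all n ∈ ℕ, |d(Y, hⁿ(Y)) − n·α(h)| ≤ K, where hⁿ(Y) = {hⁿ(y) : y ∈ Y}. -/

import Mathlib

/-!
The axis `L` is a `1`-Lipschitz quasi-geodesic: on each block `[k d₁, (k + 1) d₁]` it is an
isometric copy of `γ`, and it runs through the orbit points `L (k d₁) = hᵏ x`, which separate at
rate `α(h)`. By the Morse lemma `L` stays uniformly close to every geodesic joining two of its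
points. Hence `L` is quasi-convex, and `n ↦ d(x, hⁿ x)` is superadditive up to a constant, so
Fekete's argument gives `d(x, hⁿ x) ≤ n α(h) + C`; comparing with `d(y₀, hⁿ y₀)` gives the upper
bound. For the lower bound, quasi-projections to a quasi-convex set are coarsely `1`-Lipschitz and
`hⁿ` carries quasi-projections of `y` to those of `hⁿ y`, so `d(y, hⁿ y') ≥ d(p, hⁿ p') - C` for
projections `p, p'` of `y, y' ∈ Y`. All these projections lie in one bounded set, so the right-hand
side is at least `d(x, hⁿ x) - C' ≥ n α(h) - C'`.

Morse lemma: if `L u` is far from a geodesic, take the maximal parameter interval around `u` on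
which `L` stays far from it. Nearby points far from a geodesic have nearby projections (thin
quadrilaterals), so along this interval the projection moves at most at half the rate at which `L`
separates points, which bounds the length of the interval.
-/

/-- `γ` is a geodesic segment from `u` to `v`: an isometric embedding of
`[0, dist u v]` sending the endpoints to `u` and `v`. -/
def IsGeodesicSegment {X : Type*} [MetricSpace X] (γ : ℝ → X) (u v : X) : Prop :=
  γ 0 = u ∧ γ (dist u v) = v ∧
    ∀ s ∈ Set.Icc (0 : ℝ) (dist u v), ∀ t ∈ Set.Icc (0 : ℝ) (dist u v),
      dist (γ s) (γ t) = |s - t|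

/-- A metric space is geodesic if every pair of points is joined by a geodesic. -/
def GeodesicSpace (X : Type*) [MetricSpace X] : Prop :=
  ∀ u v : X, ∃ γ : ℝ → X, IsGeodesicSegment γ u v

/-- `X` is `δ`-hyperbolic: every geodesic triangle is `δ`-thin, i.e. each side is
contained in the closed `δ`-neighborhood of the union of the other two sides. -/
def DeltaHyperbolic (X : Type*) [MetricSpace X] (δ : ℝ) : Prop :=
  ∀ (x y z : X) (γ₁ γ₂ γ₃ : ℝ → X),
    IsGeodesicSegment γ₁ x y → IsGeodesicSegment γ₂ y z → IsGeodesicSegment γ₃ x z →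
    ∀ p ∈ γ₃ '' Set.Icc (0 : ℝ) (dist x z),
      ∃ q ∈ (γ₁ '' Set.Icc (0 : ℝ) (dist x y)) ∪ (γ₂ '' Set.Icc (0 : ℝ) (dist y z)),
        dist p q ≤ δ

/-- `U` is quasi-convex with constant `R`: every geodesic segment between points of `U`
lies in the closed `R`-neighborhood of `U`. -/
def QuasiConvexWith {X : Type*} [MetricSpace X] (U : Set X) (R : ℝ) : Prop :=
  ∀ u ∈ U, ∀ v ∈ U, ∀ γ : ℝ → X, IsGeodesicSegment γ u v →
    ∀ p ∈ γ '' Set.Icc (0 : ℝ) (dist u v), ∃ w ∈ U, dist p w ≤ R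

/-- The quasi-projection of `y` to `U`: the points of `U` which are, within an error
of `ε`, closest to `y`. -/
noncomputable def quasiProj {X : Type*} [MetricSpace X] (U : Set X) (ε : ℝ) (y : X) :
    Set X :=
  {y' ∈ U | dist y y' ≤ Metric.infDist y U + ε}

/-- The average displacement of the isometry `h`, computed at the point `x`:
`inf_{n ≥ 1} dist x (hⁿ x) / n` (this equals `lim_n dist x (hⁿ x) / n` and is
independent of `x`). -/
noncomputable def avgDisp {X : Type*} [MetricSpace X] (h : X ≃ᵢ X) (x : X) : ℝ :=
  ⨅ n : ℕ+, dist x ((⇑h)^[(n : ℕ)] x) / (n : ℝ)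

/-- `L` is an invariant axis for `h` through the orbit of `x`, built from the geodesic
segment `γ` from `x` to `h x`:  `L t = hᵏ (γ (t - k·d₁))` for `t ∈ [k·d₁, (k+1)·d₁]`,
where `d₁ = dist x (h x)`. -/
def IsInvariantAxis {X : Type*} [MetricSpace X] (h : X ≃ᵢ X) (x : X) (γ : ℝ → X)
    (L : ℝ → X) : Prop :=
  IsGeodesicSegment γ x (h x) ∧
    ∀ k : ℤ, ∀ t ∈ Set.Icc ((k : ℝ) * dist x (h x)) (((k : ℝ) + 1) * dist x (h x)),
      L t = (h ^ k) (γ (t - (k : ℝ) * dist x (h x)))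

/-- The distance between two subsets of a metric space. -/
noncomputable def setDist {X : Type*} [MetricSpace X] (Y Z : Set X) : ℝ :=
  sInf (Set.image2 dist Y Z)

open Metric Set

section Geodesic

variable {X : Type*} [MetricSpace X] {γ : ℝ → X} {u v : X}

def geodesicImage (γ : ℝ → X) (u v : X) : Set X := γ '' Icc 0 (dist u v)

namespace IsGeodesicSegment

lemma left_mem_geodesicImage (hγ : IsGeodesicSegment γ u v) : u ∈ geodesicImage γ u v :=
  ⟨0, left_mem_Icc.2 dist_nonneg, hγ.1⟩

lemma right_mem_geodesicImage (hγ : IsGeodesicSegment γ u v) : v ∈ geodesicImage γ u v :=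
  ⟨dist u v, right_mem_Icc.2 dist_nonneg, hγ.2.1⟩

lemma dist_left_apply (hγ : IsGeodesicSegment γ u v) {s : ℝ} (hs : s ∈ Icc 0 (dist u v)) :
    dist u (γ s) = s := by
  rw [← hγ.1, hγ.2.2 0 (left_mem_Icc.2 dist_nonneg) s hs, zero_sub, abs_neg, abs_of_nonneg hs.1]

lemma dist_apply_right (hγ : IsGeodesicSegment γ u v) {s : ℝ} (hs : s ∈ Icc 0 (dist u v)) :
    dist (γ s) v = dist u v - s := by
  conv_lhs => rw [← hγ.2.1]
  rw [hγ.2.2 s hs _ (right_mem_Icc.2 dist_nonneg), abs_sub_comm, abs_of_nonneg (sub_nonneg.2 hs.2)]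

lemma dist_add_dist_eq (hγ : IsGeodesicSegment γ u v) {q : X} (hq : q ∈ geodesicImage γ u v) :
    dist u q + dist q v = dist u v := by
  obtain ⟨s, hs, rfl⟩ := hq
  rw [hγ.dist_left_apply hs, hγ.dist_apply_right hs]
  ring

lemma dist_add_dist_le (hγ : IsGeodesicSegment γ u v) (w : X) :
    dist u w + dist w v ≤ dist u v + 2 * infDist w (geodesicImage γ u v) := by
  have key : ∀ q ∈ geodesicImage γ u v, (dist u w + dist w v - dist u v) / 2 ≤ dist w q := by
    intro q hq
    have := hγ.dist_add_dist_eq hq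
    linarith [dist_triangle u q w, dist_triangle w q v, dist_comm q w]
  linarith [(le_infDist ⟨u, hγ.left_mem_geodesicImage⟩).2 key]

lemma lipschitzOnWith (hγ : IsGeodesicSegment γ u v) : LipschitzOnWith 1 γ (Icc 0 (dist u v)) :=
  LipschitzOnWith.of_dist_le_mul fun s hs t ht => by
    rw [hγ.2.2 s hs t ht, NNReal.coe_one, one_mul, Real.dist_eq]

lemma isCompact_image {a b : ℝ} (hγ : IsGeodesicSegment γ u v) (hab : Icc a b ⊆ Icc 0 (dist u v)) :
    IsCompact (γ '' Icc a b) :=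
  isCompact_Icc.image_of_continuousOn (hγ.lipschitzOnWith.continuousOn.mono hab)

lemma exists_subsegment (hγ : IsGeodesicSegment γ u v) {p q : X} (hp : p ∈ geodesicImage γ u v)
    (hq : q ∈ geodesicImage γ u v) :
    ∃ σ : ℝ → X, IsGeodesicSegment σ p q ∧ geodesicImage σ p q ⊆ geodesicImage γ u v := by
  obtain ⟨s₁, h₁, rfl⟩ := hp
  obtain ⟨s₂, h₂, rfl⟩ := hq
  unfold geodesicImage
  rw [hγ.2.2 s₁ h₁ s₂ h₂]
  suffices key : ∀ e : ℝ, |e| = 1 → s₁ + e * |s₁ - s₂| = s₂ →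
      (∀ t ∈ Icc 0 |s₁ - s₂|, s₁ + e * t ∈ Icc 0 (dist u v)) →
      ∃ σ : ℝ → X, IsGeodesicSegment σ (γ s₁) (γ s₂) ∧
        σ '' Icc 0 |s₁ - s₂| ⊆ γ '' Icc 0 (dist u v) by
    rcases le_total s₁ s₂ with h | h
    · refine key 1 abs_one (by rw [abs_of_nonpos (by linarith)]; ring) fun t ht => ?_
      rw [abs_of_nonpos (by linarith)] at ht
      constructor <;> linarith [h₁.1, h₂.2, ht.1, ht.2]
    · refine key (-1) (by simp) (by rw [abs_of_nonneg (by linarith)]; ring) fun t ht => ?_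
      rw [abs_of_nonneg (by linarith)] at ht
      constructor <;> linarith [h₂.1, h₁.2, ht.1, ht.2]
  intro e he hend hmem
  refine ⟨fun t => γ (s₁ + e * t), ⟨by simp, ?_, fun a ha b hb => ?_⟩, ?_⟩
  · simp only [hγ.2.2 s₁ h₁ s₂ h₂, hend]
  · rw [hγ.2.2 s₁ h₁ s₂ h₂] at ha hb
    rw [hγ.2.2 _ (hmem a ha) _ (hmem b hb), add_sub_add_left_eq_sub, ← mul_sub, abs_mul, he,
      one_mul]
  · rintro _ ⟨t, ht, rfl⟩
    exact ⟨_, hmem t ht, rfl⟩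

lemma exists_dist_le_of_infDist_le {a b r : ℝ} (hγ : IsGeodesicSegment γ u v) (hab : a ≤ b)
    (hsub : Icc a b ⊆ Icc 0 (dist u v)) {w : X} (hw : infDist w (γ '' Icc a b) ≤ r) :
    ∃ s ∈ Icc a b, dist w (γ s) ≤ r := by
  obtain ⟨_, ⟨s, hs, rfl⟩, heq⟩ :=
    (hγ.isCompact_image hsub).exists_infDist_eq_dist ((nonempty_Icc.2 hab).image γ) w
  exact ⟨s, hs, heq ▸ hw⟩

end IsGeodesicSegment

end Geodesic

section QuasiProjection

variable {X : Type*} [MetricSpace X] {U : Set X} {ε : ℝ}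

lemma quasiProj_nonempty (hU : U.Nonempty) (hε : 0 < ε) (y : X) :
    (quasiProj U ε y).Nonempty := by
  obtain ⟨p, hp, hyp⟩ := (infDist_lt_iff hU).1 (lt_add_of_pos_right (infDist y U) hε)
  exact ⟨p, hp, hyp.le⟩

lemma Isometry.mapsTo_quasiProj {f : X → X} (hf : Isometry f) (y : X) :
    MapsTo f (quasiProj U ε y) (quasiProj (f '' U) ε (f y)) := fun p hp =>
  ⟨mem_image_of_mem f hp.1, by rw [hf.dist_eq, infDist_image hf]; exact hp.2⟩

lemma dist_le_dist_add_of_mem_quasiProj {y p q w : X} (hp : p ∈ quasiProj U ε y) (hw : w ∈ U)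
    (hq : dist y q + dist q p = dist y p) : dist q p ≤ dist q w + ε := by
  linarith [hp.2, infDist_le_dist_of_mem (x := y) hw, dist_triangle y q w]

end QuasiProjection

namespace DeltaHyperbolic

variable {X : Type*} [MetricSpace X] {δ : ℝ}

lemma quadrilateral_thin (hhyp : DeltaHyperbolic X δ) (hδ : 0 ≤ δ) (hgeo : GeodesicSpace X)
    {a b c d w : X} {γab γbc γcd γad : ℝ → X} (hab : IsGeodesicSegment γab a b)
    (hbc : IsGeodesicSegment γbc b c) (hcd : IsGeodesicSegment γcd c d)
    (had : IsGeodesicSegment γad a d) (hw : w ∈ geodesicImage γad a d) :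
    ∃ q ∈ geodesicImage γab a b ∪ geodesicImage γbc b c ∪ geodesicImage γcd c d,
      dist w q ≤ 2 * δ := by
  obtain ⟨γbd, hbd⟩ := hgeo b d
  obtain ⟨q, hq | hq, hwq⟩ := hhyp a b d γab γbd γad hab hbd had w hw
  · exact ⟨q, Or.inl (Or.inl hq), by linarith⟩
  obtain ⟨q', hq' | hq', hqq'⟩ := hhyp b c d γbc γcd γbd hbc hcd hbd q hq
  · exact ⟨q', Or.inl (Or.inr hq'), by linarith [dist_triangle w q q']⟩
  · exact ⟨q', Or.inr hq', by linarith [dist_triangle w q q']⟩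

lemma dist_add_dist_le_of_mem_quasiProj (hhyp : DeltaHyperbolic X δ) (hδ : 0 ≤ δ)
    (hgeo : GeodesicSpace X) {g : ℝ → X} {u v y p z : X} {ε : ℝ} (hε : 0 ≤ ε)
    (hg : IsGeodesicSegment g u v) (hp : p ∈ quasiProj (geodesicImage g u v) ε y)
    (hz : z ∈ geodesicImage g u v) :
    dist y p + dist p z ≤ dist y z + (4 * δ + 2 * ε + 2) := by
  set κ := ε + 2 * δ + 1
  rcases le_or_gt (dist p z) κ with hpz | hpz
  · linarith [dist_triangle y z p, dist_comm z p]
  obtain ⟨σ, hσ, hσg⟩ := hg.exists_subsegment hz hp.1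
  have ht : dist z p - κ ∈ Icc 0 (dist z p) := ⟨by linarith [dist_comm z p], by linarith⟩
  set w := σ (dist z p - κ)
  have hwσ : w ∈ geodesicImage σ z p := ⟨_, ht, rfl⟩
  have hzw : dist z w = dist z p - κ := hσ.dist_left_apply ht
  have hwp : dist w p = κ := by rw [hσ.dist_apply_right ht]; ring
  have hyw : dist y p - ε ≤ dist y w := by
    linarith [hp.2, infDist_le_dist_of_mem (x := y) (hσg hwσ)]
  obtain ⟨γ₁, hγ₁⟩ := hgeo z y
  obtain ⟨γ₂, hγ₂⟩ := hgeo y p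
  obtain ⟨q, hq | hq, hwq⟩ := hhyp z y p γ₁ γ₂ σ hγ₁ hγ₂ hσ w hwσ
  · linarith [hγ₁.dist_add_dist_eq hq, dist_triangle z q w, dist_triangle y q w, dist_comm q w,
      dist_comm y q, dist_comm z p, dist_comm y z]
  · linarith [hγ₂.dist_add_dist_eq hq, dist_triangle y q w, dist_triangle w q p, dist_comm q w]

lemma dist_le_of_mem_quasiProj_of_lt (hhyp : DeltaHyperbolic X δ) (hδ : 0 ≤ δ)
    (hgeo : GeodesicSpace X) {g : ℝ → X} {w₁ w₂ y₁ y₂ p₁ p₂ : X} {ε : ℝ}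
    (hg : IsGeodesicSegment g w₁ w₂) (hp₁ : p₁ ∈ quasiProj (geodesicImage g w₁ w₂) ε y₁)
    (hp₂ : p₂ ∈ quasiProj (geodesicImage g w₁ w₂) ε y₂)
    (hfar : dist y₁ y₂ + 2 * δ < infDist y₁ (geodesicImage g w₁ w₂)) :
    dist p₁ p₂ ≤ 8 * δ + 2 * ε := by
  obtain ⟨τ, hτ, hτg⟩ := hg.exists_subsegment hp₁.1 hp₂.1
  obtain ⟨γ₁, hγ₁⟩ := hgeo p₁ y₁
  obtain ⟨σ, hσ⟩ := hgeo y₁ y₂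
  obtain ⟨γ₂, hγ₂⟩ := hgeo y₂ p₂
  set A := Icc 0 (dist p₁ p₂) ∩ (fun t => infDist (τ t) (geodesicImage γ₁ p₁ y₁)) ⁻¹' Iic (2 * δ)
  set B := Icc 0 (dist p₁ p₂) ∩ (fun t => infDist (τ t) (geodesicImage γ₂ y₂ p₂)) ⁻¹' Iic (2 * δ)
  have hτc : ContinuousOn τ (Icc 0 (dist p₁ p₂)) := hτ.lipschitzOnWith.continuousOn
  have hA : IsClosed A := ContinuousOn.preimage_isClosed_of_isClosed
    ((continuous_infDist_pt _).comp_continuousOn hτc) isClosed_Icc isClosed_Iic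
  have hB : IsClosed B := ContinuousOn.preimage_isClosed_of_isClosed
    ((continuous_infDist_pt _).comp_continuousOn hτc) isClosed_Icc isClosed_Iic
  -- the side `[y₁, y₂]` of the quadrilateral is too far from `g` to be close to `τ`
  have hcover : Icc 0 (dist p₁ p₂) ⊆ A ∪ B := by
    intro t ht
    obtain ⟨q, (hq | hq) | hq, hq'⟩ := hhyp.quadrilateral_thin hδ hgeo hγ₁ hσ hγ₂ hτ ⟨t, ht, rfl⟩
    · exact Or.inl ⟨ht, (infDist_le_dist_of_mem hq).trans hq'⟩
    · linarith [hσ.dist_add_dist_eq hq, infDist_le_dist_of_mem (x := y₁) (hτg ⟨t, ht, rfl⟩),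
        dist_triangle y₁ q (τ t), dist_comm q (τ t), dist_nonneg (x := q) (y := y₂)]
    · exact Or.inr ⟨ht, (infDist_le_dist_of_mem hq).trans hq'⟩
  have h0 : (0 : ℝ) ∈ Icc 0 (dist p₁ p₂) := left_mem_Icc.2 dist_nonneg
  have hℓ : dist p₁ p₂ ∈ Icc 0 (dist p₁ p₂) := right_mem_Icc.2 dist_nonneg
  -- by connectedness, some `τ t` is `2δ`-close to both `[p₁, y₁]` and `[y₂, p₂]`
  obtain ⟨t, -, ⟨ht, h₁⟩, -, h₂⟩ := isPreconnected_closed_iff.1 isPreconnected_Icc A B hA hB hcover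
    ⟨0, h0, h0, by
      simp only [mem_preimage, mem_Iic, hτ.1, infDist_zero_of_mem hγ₁.left_mem_geodesicImage]
      linarith⟩
    ⟨dist p₁ p₂, hℓ, hℓ, by
      simp only [mem_preimage, mem_Iic, hτ.2.1, infDist_zero_of_mem hγ₂.right_mem_geodesicImage]
      linarith⟩
  obtain ⟨s₁, hs₁, hq₁⟩ := hγ₁.exists_dist_le_of_infDist_le dist_nonneg subset_rfl h₁
  obtain ⟨s₂, hs₂, hq₂⟩ := hγ₂.exists_dist_le_of_infDist_le dist_nonneg subset_rfl h₂
  have hτt : τ t ∈ geodesicImage g w₁ w₂ := hτg ⟨t, ht, rfl⟩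
  have e₁ := dist_le_dist_add_of_mem_quasiProj (q := γ₁ s₁) hp₁ hτt
    (by linarith [hγ₁.dist_add_dist_eq ⟨s₁, hs₁, rfl⟩, dist_comm p₁ (γ₁ s₁), dist_comm (γ₁ s₁) y₁,
      dist_comm p₁ y₁])
  have e₂ := dist_le_dist_add_of_mem_quasiProj hp₂ hτt (hγ₂.dist_add_dist_eq ⟨s₂, hs₂, rfl⟩)
  linarith [dist_triangle p₁ (γ₁ s₁) p₂, dist_triangle (γ₁ s₁) (τ t) p₂,
    dist_triangle (τ t) (γ₂ s₂) p₂, dist_comm p₁ (γ₁ s₁), dist_comm (γ₁ s₁) (τ t),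
    dist_comm (γ₂ s₂) (τ t)]

end DeltaHyperbolic

namespace QuasiConvexWith

variable {X : Type*} [MetricSpace X] {Q : Set X} {R ε : ℝ}

lemma mem_quasiProj_geodesicImage (hQ : QuasiConvexWith Q R) {g : ℝ → X} {u v a p : X}
    (hg : IsGeodesicSegment g u v) (hu : u ∈ Q) (hv : v ∈ Q) (hp : p ∈ quasiProj Q ε a)
    (hpg : p ∈ geodesicImage g u v) : p ∈ quasiProj (geodesicImage g u v) (ε + R) a := by
  refine ⟨hpg, ?_⟩
  have : infDist a Q - R ≤ infDist a (geodesicImage g u v) :=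
    (le_infDist ⟨u, hg.left_mem_geodesicImage⟩).2 fun w hw => by
      obtain ⟨w', hw', hww'⟩ := hQ u hu v hv g hg w hw
      linarith [infDist_le_dist_of_mem (x := a) hw', dist_triangle a w w']
  linarith [hp.2]

lemma dist_le_of_mem_quasiProj {δ : ℝ} (hQ : QuasiConvexWith Q R) (hhyp : DeltaHyperbolic X δ)
    (hδ : 0 ≤ δ) (hgeo : GeodesicSpace X) (hR : 0 ≤ R) (hε : 0 ≤ ε) {a b p q : X}
    (hp : p ∈ quasiProj Q ε a) (hq : q ∈ quasiProj Q ε b) :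
    dist p q ≤ dist a b + (4 * δ + 2 * (ε + R) + 2) := by
  obtain ⟨g, hg⟩ := hgeo p q
  have hp' := hQ.mem_quasiProj_geodesicImage hg hp.1 hq.1 hp hg.left_mem_geodesicImage
  have hq' := hQ.mem_quasiProj_geodesicImage hg hp.1 hq.1 hq hg.right_mem_geodesicImage
  have h₁ := hhyp.dist_add_dist_le_of_mem_quasiProj hδ hgeo (by linarith) hg hp'
    hg.right_mem_geodesicImage
  have h₂ := hhyp.dist_add_dist_le_of_mem_quasiProj hδ hgeo (by linarith) hg hq'
    hg.left_mem_geodesicImage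
  linarith [dist_triangle a b q, dist_triangle b a p, dist_comm a b, dist_comm p q]

end QuasiConvexWith

section Paths

variable {X : Type*} [MetricSpace X] {L : ℝ → X} {R : ℝ}

def StaysNearGeodesicsWith (L : ℝ → X) (R : ℝ) : Prop :=
  ∀ s t g, IsGeodesicSegment g (L s) (L t) →
    ∀ u ∈ uIcc s t, infDist (L u) (geodesicImage g (L s) (L t)) ≤ R

lemma StaysNearGeodesicsWith.quasiConvexWith_range (hM : StaysNearGeodesicsWith L R)
    (hL : Continuous L) (hR : 0 ≤ R) : QuasiConvexWith (range L) (3 * R) := by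
  rintro _ ⟨s, rfl⟩ _ ⟨t, rfl⟩ g hg _ ⟨σ, hσ, rfl⟩
  set ℓ := dist (L s) (L t)
  set A := {u : ℝ | infDist (L u) (g '' Icc 0 σ) ≤ R}
  set B := {u : ℝ | infDist (L u) (g '' Icc σ ℓ) ≤ R}
  have hA : IsClosed A := isClosed_le ((continuous_infDist_pt _).comp hL) continuous_const
  have hB : IsClosed B := isClosed_le ((continuous_infDist_pt _).comp hL) continuous_const
  have hcover : uIcc s t ⊆ A ∪ B := by
    intro u hu
    obtain ⟨τ, hτ, hdist⟩ :=
      hg.exists_dist_le_of_infDist_le dist_nonneg subset_rfl (hM s t g hg u hu)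
    rcases le_total τ σ with h | h
    · exact Or.inl ((infDist_le_dist_of_mem (mem_image_of_mem g (⟨hτ.1, h⟩ : τ ∈ Icc 0 σ))).trans
        hdist)
    · exact Or.inr ((infDist_le_dist_of_mem (mem_image_of_mem g (⟨h, hτ.2⟩ : τ ∈ Icc σ ℓ))).trans
        hdist)
  -- by connectedness, some `L u` is `R`-close to both `g '' [0, σ]` and `g '' [σ, ℓ]`
  obtain ⟨u, -, hAu, hBu⟩ := isPreconnected_closed_iff.1 isPreconnected_uIcc A B hA hB hcover
    ⟨s, left_mem_uIcc, show infDist (L s) (g '' Icc 0 σ) ≤ R by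
      rwa [← hg.1, infDist_zero_of_mem (mem_image_of_mem g (⟨le_rfl, hσ.1⟩ : (0 : ℝ) ∈ Icc 0 σ))]⟩
    ⟨t, right_mem_uIcc, show infDist (L t) (g '' Icc σ ℓ) ≤ R by
      rwa [← hg.2.1, infDist_zero_of_mem (mem_image_of_mem g (⟨hσ.2, le_rfl⟩ : ℓ ∈ Icc σ ℓ))]⟩
  obtain ⟨τ₁, hτ₁, h₁⟩ := hg.exists_dist_le_of_infDist_le hσ.1 (Icc_subset_Icc le_rfl hσ.2) hAu
  obtain ⟨τ₂, hτ₂, h₂⟩ := hg.exists_dist_le_of_infDist_le hσ.2 (Icc_subset_Icc hσ.1 le_rfl) hBu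
  have hτ₁' : τ₁ ∈ Icc 0 ℓ := ⟨hτ₁.1, hτ₁.2.trans hσ.2⟩
  have hτ₂' : τ₂ ∈ Icc 0 ℓ := ⟨hσ.1.trans hτ₂.1, hτ₂.2⟩
  have h₁₂ := hg.2.2 τ₁ hτ₁' τ₂ hτ₂'
  have h₁σ := hg.2.2 σ hσ τ₁ hτ₁'
  rw [abs_of_nonpos (by linarith [hτ₁.2, hτ₂.1])] at h₁₂
  rw [abs_of_nonneg (by linarith [hτ₁.2])] at h₁σ
  refine ⟨L u, mem_range_self u, ?_⟩
  linarith [dist_triangle (g σ) (g τ₁) (L u), dist_triangle (g τ₁) (L u) (g τ₂),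
    dist_comm (L u) (g τ₁), hτ₂.1]

end Paths

section Excursion

variable {F : ℝ → ℝ} {r : ℝ}

lemma Continuous.exists_le_forall_Icc_le (hF : Continuous F) {s u : ℝ} (hsu : s ≤ u)
    (hs : F s ≤ r) (hu : r < F u) : ∃ a ∈ Icc s u, F a ≤ r ∧ ∀ w ∈ Icc a u, r ≤ F w := by
  set S := Icc s u ∩ F ⁻¹' Iic r
  have hbdd : BddAbove S := ⟨u, fun w hw => hw.1.2⟩
  obtain ⟨ha, hFa⟩ := (isClosed_Icc.inter (isClosed_Iic.preimage hF)).csSup_mem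
    ⟨s, ⟨le_rfl, hsu⟩, hs⟩ hbdd
  refine ⟨sSup S, ha, hFa, ?_⟩
  have hlt : sSup S ≠ u := fun h => (h ▸ hFa : F u ≤ r).not_gt hu
  have hright : Ioc (sSup S) u ⊆ F ⁻¹' Ici r := fun w hw => by
    by_contra h
    rw [mem_preimage, mem_Ici, not_le] at h
    exact (le_csSup hbdd ⟨⟨ha.1.trans hw.1.le, hw.2⟩, show F w ≤ r from h.le⟩).not_gt hw.1
  rw [← closure_Ioc hlt]
  exact closure_minimal hright (isClosed_Ici.preimage hF)

lemma Continuous.exists_excursion (hF : Continuous F) {s u t : ℝ} (hsu : s ≤ u) (hut : u ≤ t)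
    (hs : F s ≤ r) (ht : F t ≤ r) (hu : r < F u) :
    ∃ a ∈ Icc s u, ∃ b ∈ Icc u t, F a ≤ r ∧ F b ≤ r ∧ ∀ w ∈ Icc a b, r ≤ F w := by
  obtain ⟨a, ha, hFa, hleft⟩ := hF.exists_le_forall_Icc_le hsu hs hu
  obtain ⟨b, hb, hFb, hright⟩ := (hF.comp continuous_neg).exists_le_forall_Icc_le
    (neg_le_neg hut) (by simpa using ht) (by simpa using hu)
  refine ⟨a, ha, -b, ⟨le_neg.1 hb.2, neg_le.1 hb.1⟩, hFa, hFb, fun w hw => ?_⟩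
  rcases le_total w u with h | h
  · exact hleft w ⟨hw.1, h⟩
  · simpa using hright (-w) ⟨le_neg.1 hw.2, neg_le_neg h⟩

end Excursion

lemma exists_seq_dist_le {a b Θ : ℝ} (hab : a ≤ b) (hΘ : 0 < Θ) :
    ∃ v : ℕ → ℝ, v 0 = a ∧ v ⌈(b - a) / Θ⌉₊ = b ∧ (∀ i, v i ∈ Icc a b) ∧
      ∀ i, dist (v i) (v (i + 1)) ≤ Θ := by
  refine ⟨fun i => min (a + i * Θ) b, by simp [hab], min_eq_right ?_,
    fun i => ⟨le_min (by nlinarith [(Nat.cast_nonneg i : (0 : ℝ) ≤ i)]) hab, min_le_right _ _⟩,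
    fun i => ?_⟩
  · linarith [(div_le_iff₀ hΘ).1 (Nat.le_ceil ((b - a) / Θ))]
  · refine (Real.dist_eq _ _ ▸ abs_min_sub_min_le_max _ _ _ _).trans ?_
    simp [← sub_sub, add_mul, abs_of_pos hΘ, hΘ.le]

namespace DeltaHyperbolic

variable {X : Type*} [MetricSpace X] {δ : ℝ} {L : ℝ → X}

lemma dist_le_of_forall_lt_infDist (hhyp : DeltaHyperbolic X δ) (hδ : 0 ≤ δ)
    (hgeo : GeodesicSpace X) (hL : LipschitzWith 1 L) {g : ℝ → X} {w₁ w₂ : X}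
    (hg : IsGeodesicSegment g w₁ w₂) {a b Θ : ℝ} (hab : a ≤ b) (hΘ : 0 < Θ)
    (hfar : ∀ w ∈ Icc a b, Θ + 2 * δ < infDist (L w) (geodesicImage g w₁ w₂)) :
    dist (L a) (L b) ≤ infDist (L a) (geodesicImage g w₁ w₂) +
      infDist (L b) (geodesicImage g w₁ w₂) + 2 + ⌈(b - a) / Θ⌉₊ * (8 * δ + 2) := by
  set N := ⌈(b - a) / Θ⌉₊
  obtain ⟨v, hv0, hvN, hvI, hvstep⟩ := exists_seq_dist_le hab hΘ
  choose p hp using fun i =>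
    quasiProj_nonempty ⟨w₁, hg.left_mem_geodesicImage⟩ one_pos (L (v i))
  have hstep : ∀ i, dist (p i) (p (i + 1)) ≤ 8 * δ + 2 := fun i => by
    have hLv : dist (L (v i)) (L (v (i + 1))) ≤ Θ := by
      simpa using (hL.dist_le_mul (v i) (v (i + 1))).trans (by simpa using hvstep i)
    simpa using hhyp.dist_le_of_mem_quasiProj_of_lt hδ hgeo hg (hp i) (hp (i + 1))
      (by linarith [hfar _ (hvI i)])
  have hchain : dist (p 0) (p N) ≤ N * (8 * δ + 2) :=
    (dist_le_range_sum_dist p N).trans <| by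
      simpa [mul_add] using Finset.sum_le_sum fun i (_ : i ∈ Finset.range N) => hstep i
  have ha := (hp 0).2
  have hb := (hp N).2
  rw [hv0] at ha
  rw [hvN] at hb
  linarith [dist_triangle (L a) (p 0) (L b), dist_triangle (p 0) (p N) (L b), dist_comm (L b) (p N)]

lemma mul_sub_le_of_forall_lt_infDist (hhyp : DeltaHyperbolic X δ) (hδ : 0 ≤ δ)
    (hgeo : GeodesicSpace X) (hL : LipschitzWith 1 L) {c b : ℝ}
    (hlow : ∀ s t, s ≤ t → c * (t - s) - b ≤ dist (L s) (L t)) {g : ℝ → X} {w₁ w₂ : X}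
    (hg : IsGeodesicSegment g w₁ w₂) {a a' Θ : ℝ} (haa' : a ≤ a') (hΘ : 0 < Θ)
    (hΘc : 8 * δ + 2 ≤ c / 2 * Θ)
    (hfar : ∀ w ∈ Icc a a', Θ + 2 * δ < infDist (L w) (geodesicImage g w₁ w₂)) :
    c / 2 * (a' - a) ≤ infDist (L a) (geodesicImage g w₁ w₂) +
      infDist (L a') (geodesicImage g w₁ w₂) + 8 * δ + 4 + b := by
  have hx : 0 ≤ (a' - a) / Θ := div_nonneg (sub_nonneg.2 haa') hΘ.le
  have hceil : (⌈(a' - a) / Θ⌉₊ : ℝ) * (8 * δ + 2) ≤ c / 2 * (a' - a) + (8 * δ + 2) :=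
    calc (⌈(a' - a) / Θ⌉₊ : ℝ) * (8 * δ + 2) ≤ ((a' - a) / Θ + 1) * (8 * δ + 2) :=
          mul_le_mul_of_nonneg_right (Nat.ceil_lt_add_one hx).le (by linarith)
      _ ≤ (a' - a) / Θ * (c / 2 * Θ) + (8 * δ + 2) := by
          rw [add_one_mul]; gcongr
      _ = c / 2 * (a' - a) + (8 * δ + 2) := by field_simp
  linarith [hlow a a' haa', hhyp.dist_le_of_forall_lt_infDist hδ hgeo hL hg haa' hΘ hfar]

theorem morse_lemma (hhyp : DeltaHyperbolic X δ) (hδ : 0 ≤ δ) (hgeo : GeodesicSpace X)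
    (hL : LipschitzWith 1 L) {c b : ℝ} (hc : 0 < c)
    (hlow : ∀ s t, s ≤ t → c * (t - s) - b ≤ dist (L s) (L t)) :
    ∃ R, 0 ≤ R ∧ StaysNearGeodesicsWith L R := by
  have hb : 0 ≤ b := by simpa using hlow 0 0 le_rfl
  set Θ := 2 * (8 * δ + 2) / c
  have hΘ : 0 < Θ := by positivity
  have hΘc : 8 * δ + 2 ≤ c / 2 * Θ := by simp only [Θ]; field_simp; rfl
  set r := Θ + 2 * δ + 1
  set T := 2 * (2 * r + 8 * δ + 4 + b) / c
  have hr : 0 ≤ r := by positivity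
  have hT : 0 ≤ T := by positivity
  have key : ∀ {g : ℝ → X} {w₁ w₂ : X}, IsGeodesicSegment g w₁ w₂ → ∀ {s t : ℝ}, s ≤ t →
      L s ∈ geodesicImage g w₁ w₂ → L t ∈ geodesicImage g w₁ w₂ →
      ∀ u ∈ Icc s t, infDist (L u) (geodesicImage g w₁ w₂) ≤ r + T := by
    intro g w₁ w₂ hg s t hst hs ht u hu
    set F : ℝ → ℝ := fun w => infDist (L w) (geodesicImage g w₁ w₂)
    have hF : Continuous F := (continuous_infDist_pt _).comp hL.continuous
    rcases le_or_gt (F u) r with h | h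
    · linarith
    -- `L` leaves the `r`-neighbourhood of `g` only for a parameter interval of length `≤ T`
    obtain ⟨a, ha, a', ha', hFa, hFa', hmid⟩ := hF.exists_excursion hu.1 hu.2
      (by simpa [F, infDist_zero_of_mem hs]) (by simpa [F, infDist_zero_of_mem ht]) h
    have hlen : a' - a ≤ T := by
      rw [le_div_iff₀ hc]
      linarith [hhyp.mul_sub_le_of_forall_lt_infDist hδ hgeo hL hlow hg (ha.2.trans ha'.1) hΘ hΘc
        fun w hw => by linarith [hmid w hw]]
    have hLua : dist (L u) (L a) ≤ u - a := by
      simpa [Real.dist_eq, abs_of_nonneg (sub_nonneg.2 ha.2)] using hL.dist_le_mul u a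
    linarith [infDist_le_infDist_add_dist (x := L u) (y := L a) (s := geodesicImage g w₁ w₂),
      ha'.1]
  refine ⟨r + T, by positivity, fun s t g hg u hu => ?_⟩
  rcases le_total s t with h | h
  · exact key hg h hg.left_mem_geodesicImage hg.right_mem_geodesicImage u (uIcc_of_le h ▸ hu)
  · exact key hg h hg.right_mem_geodesicImage hg.left_mem_geodesicImage u (uIcc_of_ge h ▸ hu)

end DeltaHyperbolic

lemma Subadditive.sub_le_mul_div {a : ℕ → ℝ} (hsub : Subadditive a) (h0 : a 0 = 0) {C : ℝ}
    (hsup : ∀ m n, a m + a n ≤ a (m + n) + C) (n : ℕ) {m : ℕ} (hm : 0 < m) :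
    a n - C ≤ n * (a m / m) := by
  have hsup' : ∀ j : ℕ, j * (a n - C) ≤ a (j * n) := by
    intro j
    induction j with
    | zero => simp [h0]
    | succ j ih => rw [Nat.succ_mul]; push_cast; linarith [hsup (j * n) n]
  have := hsub.apply_mul_add_le n m 0
  rw [add_zero, h0, add_zero, mul_comm n m] at this
  rw [mul_div_assoc', le_div_iff₀ (by positivity)]
  linarith [hsup' m]

section Isometry

variable {X : Type*} [MetricSpace X]

lemma IsometryEquiv.coe_pow (h : X ≃ᵢ X) (n : ℕ) : ⇑(h ^ n) = (⇑h)^[n] := by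
  induction n with
  | zero => rfl
  | succ n ih => rw [pow_succ, coe_mul, ih, Function.iterate_succ]

lemma IsometryEquiv.dist_iterate (h : X ≃ᵢ X) (n : ℕ) (a b : X) :
    dist ((⇑h)^[n] a) ((⇑h)^[n] b) = dist a b := by
  rw [← h.coe_pow]
  exact (h ^ n).dist_eq a b

lemma avgDisp_nonneg (h : X ≃ᵢ X) (x : X) : 0 ≤ avgDisp h x :=
  le_ciInf fun _ => by positivity

lemma mul_avgDisp_le_dist (h : X ≃ᵢ X) (x : X) (n : ℕ) :
    n * avgDisp h x ≤ dist x ((⇑h)^[n] x) := by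
  rcases Nat.eq_zero_or_pos n with rfl | hn
  · simp
  have : avgDisp h x ≤ dist x ((⇑h)^[n] x) / n :=
    ciInf_le (f := fun m : ℕ+ => dist x ((⇑h)^[m] x) / m) ⟨0, by rintro _ ⟨m, rfl⟩; positivity⟩
      ⟨n, hn⟩
  rwa [le_div_iff₀ (by positivity), mul_comm] at this

lemma dist_iterate_le_mul_avgDisp_add (h : X ≃ᵢ X) (x : X) {C : ℝ}
    (hsup : ∀ m n, dist x ((⇑h)^[m] x) + dist x ((⇑h)^[n] x) ≤ dist x ((⇑h)^[m + n] x) + C)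
    (n : ℕ) : dist x ((⇑h)^[n] x) ≤ n * avgDisp h x + C := by
  have hsub : Subadditive fun k => dist x ((⇑h)^[k] x) := fun m k => by
    simpa only [Function.iterate_add_apply, h.dist_iterate] using
      dist_triangle x ((⇑h)^[m] x) ((⇑h)^[m] ((⇑h)^[k] x))
  rw [← sub_le_iff_le_add, avgDisp, Real.mul_iInf_of_nonneg (Nat.cast_nonneg n)]
  exact le_ciInf fun m => hsub.sub_le_mul_div (by simp) hsup n m.pos

end Isometry

lemma mem_Icc_floor_div_mul {d : ℝ} (hd : 0 < d) (t : ℝ) :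
    t ∈ Icc (⌊t / d⌋ * d) ((⌊t / d⌋ + 1) * d) :=
  ⟨(le_div_iff₀ hd).1 (Int.floor_le _), ((div_lt_iff₀ hd).1 (Int.lt_floor_add_one _)).le⟩

namespace IsInvariantAxis

variable {X : Type*} [MetricSpace X] {h : X ≃ᵢ X} {x : X} {γ L : ℝ → X}

lemma dist_eq_of_mem_Icc (hL : IsInvariantAxis h x γ L) (k : ℤ) {s t : ℝ}
    (hs : s ∈ Icc (k * dist x (h x)) ((k + 1) * dist x (h x)))
    (ht : t ∈ Icc (k * dist x (h x)) ((k + 1) * dist x (h x))) :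
    dist (L s) (L t) = |s - t| := by
  have hmem : ∀ r ∈ Icc (k * dist x (h x)) ((k + 1) * dist x (h x)),
      r - k * dist x (h x) ∈ Icc 0 (dist x (h x)) := fun r hr =>
    ⟨by linarith [hr.1], by linarith [hr.2]⟩
  rw [hL.2 k s hs, hL.2 k t ht, (h ^ k).dist_eq, hL.1.2.2 _ (hmem s hs) _ (hmem t ht),
    sub_sub_sub_cancel_right]

lemma apply_intCast_mul (hL : IsInvariantAxis h x γ L) (k : ℤ) :
    L (k * dist x (h x)) = (h ^ k) x := by
  rw [hL.2 k _ ⟨le_rfl, by linarith [dist_nonneg (x := x) (y := h x)]⟩, sub_self, hL.1.1]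

lemma apply_natCast_mul (hL : IsInvariantAxis h x γ L) (n : ℕ) :
    L (n * dist x (h x)) = (⇑h)^[n] x := by
  simpa [← IsometryEquiv.coe_pow] using hL.apply_intCast_mul n

lemma apply_add (hL : IsInvariantAxis h x γ L) (hd : 0 < dist x (h x)) (t : ℝ) :
    L (t + dist x (h x)) = h (L t) := by
  have ht := mem_Icc_floor_div_mul hd t
  have ht' : t + dist x (h x) ∈
      Icc (((⌊t / dist x (h x)⌋ + 1 : ℤ) : ℝ) * dist x (h x))
        ((((⌊t / dist x (h x)⌋ + 1 : ℤ) : ℝ) + 1) * dist x (h x)) := by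
    push_cast
    constructor <;> linarith [ht.1, ht.2]
  rw [hL.2 _ _ ht', hL.2 _ t ht, add_comm _ 1, zpow_one_add, IsometryEquiv.mul_apply]
  congr 3
  push_cast
  ring

lemma image_range (hL : IsInvariantAxis h x γ L) (hd : 0 < dist x (h x)) :
    h '' range L = range L := by
  ext y
  constructor
  · rintro ⟨_, ⟨t, rfl⟩, rfl⟩
    exact ⟨t + dist x (h x), hL.apply_add hd t⟩
  · rintro ⟨t, rfl⟩
    exact ⟨L (t - dist x (h x)), mem_range_self _, by rw [← hL.apply_add hd, sub_add_cancel]⟩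

lemma lipschitzWith (hL : IsInvariantAxis h x γ L) (hd : 0 < dist x (h x)) :
    LipschitzWith 1 L := by
  set d := dist x (h x)
  have hblock : ∀ s t, s ≤ t → t ≤ (⌊s / d⌋ + 1) * d → dist (L s) (L t) ≤ t - s := by
    intro s t hst ht
    have hs := mem_Icc_floor_div_mul hd s
    rw [hL.dist_eq_of_mem_Icc _ hs ⟨hs.1.trans hst, ht⟩, abs_of_nonpos (by linarith)]
    linarith
  have key : ∀ n : ℕ, ∀ s t, s ≤ t → t ≤ (⌊s / d⌋ + 1 + n) * d → dist (L s) (L t) ≤ t - s := by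
    intro n
    induction n with
    | zero => simpa using hblock
    | succ n ih =>
      intro s t hst ht
      rcases le_or_gt t ((⌊s / d⌋ + 1) * d) with hts | hts
      · exact hblock s t hst hts
      set m := (⌊s / d⌋ + 1) * d
      have hm : ⌊m / d⌋ = ⌊s / d⌋ + 1 := by
        rw [show m / d = ((⌊s / d⌋ + 1 : ℤ) : ℝ) by push_cast; field_simp [m]; ring,
          Int.floor_intCast]
      have hsm : s ≤ m := (mem_Icc_floor_div_mul hd s).2
      have hmt := ih m t hts.le (by rw [hm]; push_cast at ht ⊢; linarith)
      linarith [hblock s m hsm le_rfl, dist_triangle (L s) (L m) (L t)]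
  refine LipschitzWith.of_dist_le_mul fun s t => ?_
  wlog hst : s ≤ t generalizing s t
  · rw [dist_comm, dist_comm s]
    exact this t s (le_of_not_ge hst)
  rw [NNReal.coe_one, one_mul, Real.dist_eq, abs_sub_comm, abs_of_nonneg (sub_nonneg.2 hst)]
  refine key ⌈(t - s) / d⌉₊ s t hst ?_
  linarith [(div_le_iff₀ hd).1 (Nat.le_ceil ((t - s) / d)), (mem_Icc_floor_div_mul hd s).2]

lemma sub_le_dist (hL : IsInvariantAxis h x γ L) (hd : 0 < dist x (h x)) {s t : ℝ} (hst : s ≤ t) :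
    avgDisp h x / dist x (h x) * (t - s) - (avgDisp h x + 2 * dist x (h x)) ≤
      dist (L s) (L t) := by
  set d := dist x (h x) with hd_def
  have hs := mem_Icc_floor_div_mul hd s
  have ht := mem_Icc_floor_div_mul hd t
  obtain ⟨N, hN⟩ := Int.le.dest (Int.floor_le_floor (div_le_div_of_nonneg_right hst hd.le))
  -- `L` passes within `d` of the orbit points `L (k * d) = hᵏ x`
  have horbit : dist (L (⌊s / d⌋ * d)) (L (⌊t / d⌋ * d)) = dist x ((⇑h)^[N] x) := by
    rw [hL.apply_intCast_mul, hL.apply_intCast_mul, ← hN, zpow_add, IsometryEquiv.mul_apply,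
      IsometryEquiv.dist_eq, zpow_natCast, IsometryEquiv.coe_pow]
  have h₁ := hL.dist_eq_of_mem_Icc _ hs ⟨le_rfl, by linarith [hs.1]⟩
  have h₂ := hL.dist_eq_of_mem_Icc _ ⟨le_rfl, by linarith [ht.1]⟩ ht
  rw [← hd_def, abs_of_nonneg (by linarith [hs.1])] at h₁
  rw [← hd_def, abs_of_nonpos (by linarith [ht.1])] at h₂
  have hN' : (t - s) / d - 1 ≤ N := by
    have : (⌊t / d⌋ : ℝ) * d = ⌊s / d⌋ * d + N * d := by rw [← hN]; push_cast; ring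
    rw [div_sub_one hd.ne', div_le_iff₀ hd]
    linarith [hs.1, ht.2]
  have hα := mul_le_mul_of_nonneg_right hN' (avgDisp_nonneg h x)
  have hα' : avgDisp h x / d * (t - s) = (t - s) / d * avgDisp h x := by ring
  linarith [hs.2, ht.2, mul_avgDisp_le_dist h x N,
    dist_triangle (L (⌊s / d⌋ * d)) (L s) (L (⌊t / d⌋ * d)),
    dist_triangle (L s) (L t) (L (⌊t / d⌋ * d)), dist_comm (L s) (L (⌊s / d⌋ * d)),
    dist_comm (L t) (L (⌊t / d⌋ * d))]

lemma dist_iterate_le (hL : IsInvariantAxis h x γ L) (hgeo : GeodesicSpace X) {R : ℝ}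
    (hM : StaysNearGeodesicsWith L R) (n : ℕ) :
    dist x ((⇑h)^[n] x) ≤ n * avgDisp h x + 2 * R := by
  refine dist_iterate_le_mul_avgDisp_add h x (fun m k => ?_) n
  obtain ⟨g, hg⟩ := hgeo (L 0) (L ((m + k : ℕ) * dist x (h x)))
  have hu : (m : ℝ) * dist x (h x) ∈ uIcc 0 ((m + k : ℕ) * dist x (h x)) := by
    rw [uIcc_of_le (by positivity)]
    exact ⟨by positivity, by gcongr; omega⟩
  have key : dist (L 0) (L (m * dist x (h x))) +
      dist (L (m * dist x (h x))) (L ((m + k : ℕ) * dist x (h x))) ≤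
        dist (L 0) (L ((m + k : ℕ) * dist x (h x))) + 2 * R := by
    linarith [hg.dist_add_dist_le (L (m * dist x (h x))), hM _ _ g hg _ hu]
  rw [show L 0 = x by simpa using hL.apply_natCast_mul 0, hL.apply_natCast_mul,
    hL.apply_natCast_mul, Function.iterate_add_apply, h.dist_iterate] at key
  rwa [Function.iterate_add_apply]

end IsInvariantAxis

section SetDist

variable {X : Type*} [MetricSpace X] {Y Z : Set X}

lemma le_setDist (hY : Y.Nonempty) (hZ : Z.Nonempty) {r : ℝ}
    (h : ∀ y ∈ Y, ∀ z ∈ Z, r ≤ dist y z) : r ≤ setDist Y Z :=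
  le_csInf (hY.image2 hZ) (by rintro _ ⟨y, hy, z, hz, rfl⟩; exact h y hy z hz)

lemma setDist_le_dist {y z : X} (hy : y ∈ Y) (hz : z ∈ Z) : setDist Y Z ≤ dist y z :=
  csInf_le ⟨0, by rintro _ ⟨_, _, _, _, rfl⟩; exact dist_nonneg⟩ (mem_image2_of_mem hy hz)

lemma QuasiConvexWith.exists_sub_le_setDist_iterate_image {Q : Set X} {R δ ε : ℝ}
    (hQ : QuasiConvexWith Q R) (hhyp : DeltaHyperbolic X δ) (hδ : 0 ≤ δ)
    (hgeo : GeodesicSpace X) (hR : 0 ≤ R) (hQne : Q.Nonempty) {h : X ≃ᵢ X} (hhQ : h '' Q = Q)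
    (hY : Y.Nonempty) (hε : 0 < ε) (hbdd : Bornology.IsBounded (⋃ y ∈ Y, quasiProj Q ε y))
    (x : X) : ∃ K, 0 ≤ K ∧ ∀ n : ℕ, dist x ((⇑h)^[n] x) - K ≤ setDist Y ((⇑h)^[n] '' Y) := by
  obtain ⟨y₀, hy₀⟩ := hY
  obtain ⟨p₀, hp₀⟩ := quasiProj_nonempty hQne hε y₀
  obtain ⟨D, hD⟩ := isBounded_iff.1 hbdd
  have hP : ∀ {y p}, y ∈ Y → p ∈ quasiProj Q ε y → p ∈ ⋃ y ∈ Y, quasiProj Q ε y :=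
    fun hy hp => mem_biUnion hy hp
  have hD0 : 0 ≤ D := dist_nonneg.trans (hD (hP hy₀ hp₀) (hP hy₀ hp₀))
  set E := 4 * δ + 2 * (ε + R) + 2
  refine ⟨E + 2 * D + 2 * dist x p₀, by positivity, fun n => ?_⟩
  have hQn : (⇑h)^[n] '' Q = Q := by rw [image_iterate_eq]; exact Function.iterate_fixed hhQ n
  refine le_setDist ⟨y₀, hy₀⟩ ⟨_, mem_image_of_mem _ hy₀⟩ ?_
  rintro y hy _ ⟨y', hy', rfl⟩
  obtain ⟨p, hp⟩ := quasiProj_nonempty hQne hε y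
  obtain ⟨p', hp'⟩ := quasiProj_nonempty hQne hε y'
  have hp'n : (⇑h)^[n] p' ∈ quasiProj Q ε ((⇑h)^[n] y') :=
    hQn ▸ (h.coe_pow n ▸ (h ^ n).isometry).mapsTo_quasiProj y' hp'
  linarith [hQ.dist_le_of_mem_quasiProj hhyp hδ hgeo hR hε.le hp hp'n, hD (hP hy₀ hp₀) (hP hy hp),
    hD (hP hy₀ hp₀) (hP hy' hp'), h.dist_iterate n x p₀, h.dist_iterate n p₀ p',
    dist_triangle x p₀ ((⇑h)^[n] x), dist_triangle p₀ ((⇑h)^[n] p₀) ((⇑h)^[n] x),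
    dist_triangle p₀ p ((⇑h)^[n] p₀), dist_triangle p ((⇑h)^[n] p') ((⇑h)^[n] p₀),
    dist_comm ((⇑h)^[n] p₀) ((⇑h)^[n] x), dist_comm ((⇑h)^[n] p') ((⇑h)^[n] p₀)]

end SetDist

/-- **Theorem 6.2 (bounded projection implies linear growth)**: if `Y` has bounded
projection with respect to the hyperbolic isometry `h`, then
`|d(Y, hⁿ(Y)) - n·α(h)| ≤ K` for all `n`. -/
theorem bounded_projection_implies_linear_growth {X : Type*} [MetricSpace X]
    (δ : ℝ) (hδ : 0 ≤ δ)
    (hgeo : GeodesicSpace X) (hhyp : DeltaHyperbolic X δ)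
    (h : X ≃ᵢ X) (x : X) (hα : 0 < avgDisp h x)
    (γ L : ℝ → X) (hL : IsInvariantAxis h x γ L)
    (Y : Set X) (hYne : Y.Nonempty)
    (hbp : ∃ ε > 0, Bornology.IsBounded (⋃ y ∈ Y, quasiProj (Set.range L) ε y)) :
    ∃ K : ℝ, 0 ≤ K ∧
      ∀ n : ℕ, |setDist Y ((⇑h)^[n] '' Y) - (n : ℝ) * avgDisp h x| ≤ K := by
  obtain ⟨ε, hε, hbdd⟩ := hbp
  have hd : 0 < dist x (h x) := hα.trans_le (by simpa using mul_avgDisp_le_dist h x 1)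
  have hLip := hL.lipschitzWith hd
  obtain ⟨R, hR, hnear⟩ :=
    hhyp.morse_lemma hδ hgeo hLip (by positivity) fun _ _ => hL.sub_le_dist hd
  obtain ⟨K, hK, hlower⟩ :=
    (hnear.quasiConvexWith_range hLip.continuous hR).exists_sub_le_setDist_iterate_image hhyp hδ
      hgeo (by positivity) (range_nonempty L) (hL.image_range hd) hYne hε hbdd x
  obtain ⟨y₀, hy₀⟩ := hYne
  refine ⟨K + 2 * R + 2 * dist x y₀, by positivity, fun n => abs_le.2 ⟨?_, ?_⟩⟩
  · linarith [hlower n, mul_avgDisp_le_dist h x n, dist_nonneg (x := x) (y := y₀)]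
  · linarith [setDist_le_dist hy₀ (mem_image_of_mem (⇑h)^[n] hy₀), hL.dist_iterate_le hgeo hnear n,
      h.dist_iterate n x y₀, dist_triangle y₀ x ((⇑h)^[n] y₀),
      dist_triangle x ((⇑h)^[n] x) ((⇑h)^[n] y₀), dist_comm y₀ x]
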